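/- arXiv:1904.11919 — 3 statements merged into one kernel-verified Lean document; each statement's English description precedes it below -/
import Mathlib

section
/- Let v_1,...,v_k be unit vectors in R^n, let S = span(v_1,...,v_k), and let Q = (I - v_k v_kᵀ)(I - v_{k-1} v_{k-1}ᵀ)···(I - v_1 v_1ᵀ). Let F range over all matrices whose columns form a maximal linearly independent subset of {v_1,...,v_k}. Then for every unit vector y in S, ‖Qy‖₂ ≤ sqrt(1 - min_F det(FᵀF)). -/
set_option maxHeartbeats 1000000

open Matrix Submodule Finset

noncomputable section MeanyAux

variable {E : Type*} [NormedAddCommGroup E] [InnerProductSpace ℝ E]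

namespace MeanyAux

/-- Gram matrix of a finite family. -/
def gram {ι : Type*} [Fintype ι] (f : ι → E) : Matrix ι ι ℝ :=
  Matrix.of fun i j => (inner ℝ (f i) (f j) : ℝ)

lemma gram_posSemidef {ι : Type*} [Fintype ι] (f : ι → E) : (gram f).PosSemidef := by
  exact Matrix.posSemidef_gram ℝ f

lemma gram_det_nonneg {ι : Type*} [Fintype ι] [DecidableEq ι] (f : ι → E) :
    0 ≤ (gram f).det := by
  have h := gram_posSemidef f
  rw [h.1.det_eq_prod_eigenvalues]
  have : ∀ i, (0:ℝ) ≤ h.1.eigenvalues i := fun i => h.eigenvalues_nonneg i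
  exact Finset.prod_nonneg fun i _ => this i

lemma gram_det_comp_equiv {ι κ : Type*} [Fintype ι] [Fintype κ] [DecidableEq ι] [DecidableEq κ]
    (e : κ ≃ ι) (f : ι → E) : (gram (fun x => f (e x))).det = (gram f).det := by
  have h : gram (fun x => f (e x)) = (gram f).submatrix e e := rfl
  rw [h, Matrix.det_submatrix_equiv_self]

lemma gram_conj {ι : Type*} [Fintype ι] (A : Matrix ι ι ℝ) (f : ι → E) :
    gram (fun i => ∑ j, A i j • f j) = A * gram f * Aᵀ := by
  ext i j
  simp only [gram, Matrix.of_apply, Matrix.mul_apply, Matrix.transpose_apply,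
    sum_inner, inner_sum, real_inner_smul_left, real_inner_smul_right]
  refine Finset.sum_congr rfl fun x _ => ?_
  rw [Finset.sum_mul]
  refine Finset.sum_congr rfl fun y _ => ?_
  ring

/-- The product of projections, first factor `v 0` applied first. -/
def Qop {k : ℕ} (v : Fin k → E) : Function.End E :=
  (((List.ofFn fun i : Fin k =>
      (fun x : E => x - (inner ℝ (v i) x : ℝ) • v i)) :
        List (Function.End E)).reverse).prod

lemma Qop_zero (v : Fin 0 → E) : Qop v = 1 := by
  rfl

lemma Qop_succ {k : ℕ} (v : Fin (k+1) → E) (x : E) :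
    Qop v x = Qop (fun i => v i.succ) (x - (inner ℝ (v 0) x : ℝ) • v 0) := by
  have h : Qop v = Qop (fun i => v i.succ) *
      (show Function.End E from fun x : E => x - (inner ℝ (v 0) x : ℝ) • v 0) := by
    show (((List.ofFn fun i : Fin (k+1) => (fun x : E => x - (inner ℝ (v i) x : ℝ) • v i)) :
        List (Function.End E)).reverse).prod = _
    erw [List.ofFn_succ, List.reverse_cons, List.prod_append, List.prod_singleton]
    rfl
  rw [h]
  rfl

lemma Qop_mem {k : ℕ} (v : Fin k → E) (W : Submodule ℝ E) (hv : ∀ i, v i ∈ W) :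
    ∀ x ∈ W, Qop v x ∈ W := by
  induction k with
  | zero => intro x hx; rw [Qop_zero]; exact hx
  | succ k ih =>
    intro x hx
    rw [Qop_succ]
    exact ih (fun i => v i.succ) (fun i => hv i.succ) _
      (Submodule.sub_mem _ hx (Submodule.smul_mem _ _ (hv 0)))

lemma Qop_add_orth {k : ℕ} (v : Fin k → E) (e : E) (he : ∀ i, (inner ℝ (v i) e : ℝ) = 0) :
    ∀ (x : E) (c : ℝ), Qop v (x + c • e) = Qop v x + c • e := by
  induction k with
  | zero => intro x c; rw [Qop_zero]; rfl
  | succ k ih =>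
    intro x c
    rw [Qop_succ, Qop_succ]
    have h : x + c • e - (inner ℝ (v 0) (x + c • e) : ℝ) • v 0
        = (x - (inner ℝ (v 0) x : ℝ) • v 0) + c • e := by
      rw [inner_add_right, inner_smul_right, he 0]
      simp
      abel
    rw [h]
    exact ih (fun i => v i.succ) (fun i => he i.succ) _ _

lemma norm_proj_sq (w x : E) (hw : ‖w‖ = 1) :
    ‖x - (inner ℝ w x : ℝ) • w‖ ^ 2 = ‖x‖ ^ 2 - (inner ℝ w x : ℝ) ^ 2 := by
  rw [norm_sub_sq_real, inner_smul_right, norm_smul, real_inner_comm x w]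
  simp [hw, mul_pow]
  ring

lemma key_scalar (al be d c : ℝ) (hd : 0 ≤ d) (hd1 : d ≤ 1)
    (hbe : be ^ 2 ≤ (1 - d ^ 2) * (c ^ 2 - al ^ 2)) :
    (al * (1 - d ^ 2) - d * be) ^ 2 ≤ (1 - d ^ 2) * c ^ 2 := by
  have h2 : 0 ≤ 1 - d ^ 2 := by nlinarith
  nlinarith [mul_nonneg h2 (sq_nonneg (al * d + be))]

variable [FiniteDimensional ℝ E]

theorem main : ∀ (k : ℕ) (v : Fin k → E), (∀ i, ‖v i‖ = 1) →
    ∀ y ∈ Submodule.span ℝ (Set.range v),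
    ∃ s : Finset (Fin k), LinearIndependent ℝ (fun i : s => v i) ∧
      Submodule.span ℝ (v '' ↑s) = Submodule.span ℝ (Set.range v) ∧
      (gram fun i : s => v i).det ≤ 1 ∧
      ‖Qop v y‖ ^ 2 ≤ (1 - (gram fun i : s => v i).det) * ‖y‖ ^ 2 := by
  intro k
  induction k with
  | zero =>
    intro v hv y hy
    have hy0 : y = 0 := by
      rw [Set.range_eq_empty v, Submodule.span_empty, Submodule.mem_bot] at hy
      exact hy
    haveI : IsEmpty ↥(∅ : Finset (Fin 0)) := Finset.isEmpty_coe_sort.mpr rfl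
    refine ⟨∅, linearIndependent_empty_type, ?_, ?_, ?_⟩
    · rw [Set.range_eq_empty v]
      simp
    · rw [Matrix.det_isEmpty]
    · rw [Matrix.det_isEmpty, Qop_zero, hy0]
      have h1 : (1 : Function.End E) (0 : E) = 0 := rfl
      rw [h1]
      simp
  | succ k ih =>
    intro v hv y hy
    have hv' : ∀ i : Fin k, ‖v i.succ‖ = 1 := fun i => hv i.succ
    set v' : Fin k → E := fun i => v i.succ with hv'def
    set U' : Submodule ℝ E := Submodule.span ℝ (Set.range v') with hU'def
    have hvU' : ∀ i, v' i ∈ U' := fun i => Submodule.subset_span (Set.mem_range_self i)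
    have hrange : Set.range v = insert (v 0) (Set.range v') := Fin.range_fin_succ v
    have hU : Submodule.span ℝ (Set.range v) = Submodule.span ℝ {v 0} ⊔ U' := by
      rw [hrange, Submodule.span_insert]
    have hv0mem : v 0 ∈ Submodule.span ℝ (Set.range v) :=
      Submodule.subset_span (Set.mem_range_self 0)
    set a0 : ℝ := (inner ℝ (v 0) y : ℝ) with ha0def
    set y1 : E := y - a0 • v 0 with hy1def
    have hy1mem : y1 ∈ Submodule.span ℝ (Set.range v) :=
      Submodule.sub_mem _ hy (Submodule.smul_mem _ _ hv0mem)
    have hQy : Qop v y = Qop v' y1 := Qop_succ v y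
    have hnormy1 : ‖y1‖ ^ 2 = ‖y‖ ^ 2 - a0 ^ 2 := norm_proj_sq (v 0) y (hv 0)
    have hv0y1 : (inner ℝ (v 0) y1 : ℝ) = 0 := by
      rw [hy1def, inner_sub_right, real_inner_smul_right, real_inner_self_eq_norm_sq, hv 0]
      simp [ha0def]
    by_cases hc : v 0 ∈ U'
    · -- Case 1 : v 0 ∈ span of the rest
      have hUeq : Submodule.span ℝ (Set.range v) = U' := by
        rw [hU]
        exact sup_eq_right.mpr (Submodule.span_le.mpr (by simpa using hc))
      have hy1U' : y1 ∈ U' := hUeq ▸ hy1mem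
      obtain ⟨s', li', sp', det_le, hbound⟩ := ih v' hv' y1 hy1U'
      set emb : Fin k ↪ Fin (k+1) := ⟨Fin.succ, Fin.succ_injective k⟩ with hembdef
      set s : Finset (Fin (k+1)) := s'.map emb with hsdef
      obtain ⟨e1, he1⟩ : ∃ e : ↥s' ≃ ↥s, ∀ x : ↥s',
          ((e x : ↥s) : Fin (k+1)) = (x : Fin k).succ := by
        refine ⟨Equiv.ofBijective
          (fun x => ⟨emb x.1, Finset.mem_map_of_mem emb x.2⟩) ⟨?_, ?_⟩, fun x => rfl⟩
        · intro a b hab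
          exact Subtype.ext (emb.injective (congrArg Subtype.val hab))
        · rintro ⟨x, hx⟩
          obtain ⟨a, ha, rfl⟩ := Finset.mem_map.mp hx
          exact ⟨⟨a, ha⟩, rfl⟩
      have hfun1 : (fun x : s' => v ((e1 x : ↥s) : Fin (k+1))) = fun i : s' => v' i := by
        funext x
        rw [he1 x]
      have hdetEq : (gram fun i : s => v i).det = (gram fun i : s' => v' i).det := by
        calc (gram fun i : s => v i).det
            = (gram fun x : s' => v ((e1 x : ↥s) : Fin (k+1))).det :=
              (gram_det_comp_equiv e1 (fun i : s => v (i : Fin (k+1)))).symm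
          _ = (gram fun i : s' => v' i).det := by rw [hfun1]
      have hli : LinearIndependent ℝ (fun i : s => v i) := by
        have h1 := li'.comp e1.symm e1.symm.injective
        have h2 : ((fun i : s' => v' i) ∘ e1.symm) = fun i : s => v i := by
          funext x
          show v' (e1.symm x) = v (x : Fin (k+1))
          have h3 : v' (e1.symm x) = v ((e1 (e1.symm x) : ↥s) : Fin (k+1)) := by
            rw [he1 (e1.symm x)]
          rw [h3, Equiv.apply_symm_apply]
        rwa [h2] at h1
      have himg : v '' ↑s = v' '' ↑s' := by
        rw [hsdef, Finset.coe_map, Set.image_image]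
        rfl
      have hspan : Submodule.span ℝ (v '' ↑s) = Submodule.span ℝ (Set.range v) := by
        rw [himg, sp', hUeq, hU'def]
      refine ⟨s, hli, hspan, ?_, ?_⟩
      · rw [hdetEq]; exact det_le
      · rw [hdetEq, hQy]
        have h1 : ‖Qop v' y1‖ ^ 2 ≤ (1 - (gram fun i : s' => v' i).det) * ‖y1‖ ^ 2 := hbound
        nlinarith [mul_nonneg (by linarith : (0:ℝ) ≤ 1 - (gram fun i : s' => v' i).det)
          (sq_nonneg a0)]
    · -- Case 2 : v 0 ∉ span of the rest
      obtain ⟨p, hpU', q, hqperp, hv0pq⟩ := Submodule.exists_add_mem_mem_orthogonal (K := U') (v 0)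
      have hqne : q ≠ 0 := by
        intro h
        apply hc
        rw [h, add_zero] at hv0pq
        rw [hv0pq]; exact hpU'
      set d : ℝ := ‖q‖ with hddef
      have hd0 : 0 < d := norm_pos_iff.mpr hqne
      set e : E := d⁻¹ • q with hedef
      have hee : ‖e‖ = 1 := by
        rw [hedef, norm_smul]
        simp [hddef, abs_of_nonneg (inv_nonneg.mpr hd0.le), inv_mul_cancel₀ hd0.ne', inv_mul_cancel₀ (norm_pos_iff.mpr hqne).ne']
      have heperp : ∀ u ∈ U', (inner ℝ u e : ℝ) = 0 := by
        intro u hu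
        rw [hedef, real_inner_smul_right, (Submodule.mem_orthogonal U' q).mp hqperp u hu,
          mul_zero]
      have heperp' : ∀ u ∈ U', (inner ℝ e u : ℝ) = 0 := fun u hu => by
        rw [real_inner_comm]; exact heperp u hu
      have heq : (inner ℝ e q : ℝ) = d := by
        rw [hedef, real_inner_smul_left, real_inner_self_eq_norm_sq]
        field_simp [hddef]
        ring
      have hev0 : (inner ℝ e (v 0) : ℝ) = d := by
        rw [hv0pq, inner_add_right, heperp' p hpU', heq, zero_add]
      have hd1 : d ≤ 1 := by
        have hqp : (inner ℝ q p : ℝ) = 0 := by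
          rw [real_inner_comm]
          exact (Submodule.mem_orthogonal U' q).mp hqperp p hpU'
        have h1 : (inner ℝ q (v 0) : ℝ) = d ^ 2 := by
          rw [hv0pq, inner_add_right, hqp, real_inner_self_eq_norm_sq, zero_add]
        have h2 : (inner ℝ q (v 0) : ℝ) ≤ d := by
          calc (inner ℝ q (v 0) : ℝ) ≤ ‖q‖ * ‖v 0‖ := real_inner_le_norm q (v 0)
            _ = d := by rw [hv 0, mul_one]
        nlinarith
      have hv0de : v 0 - d • e = p := by
        rw [hedef, smul_smul, mul_inv_cancel₀ hd0.ne', one_smul, hv0pq]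
        abel
      -- splitting lemma
      have hsplit : ∀ x ∈ Submodule.span ℝ (Set.range v), x - (inner ℝ e x : ℝ) • e ∈ U' := by
        intro x hx
        rw [hU] at hx
        obtain ⟨a, ha, b, hb, hab⟩ := Submodule.mem_sup.mp hx
        obtain ⟨t, rfl⟩ := Submodule.mem_span_singleton.mp ha
        have hix : (inner ℝ e x : ℝ) = t * d := by
          rw [← hab, inner_add_right, real_inner_smul_right, hev0, heperp' b hb, add_zero]
        have h6 : x - (inner ℝ e x : ℝ) • e = t • p + b := by
          rw [hix, ← hab, ← hv0de]
          module
        rw [h6]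
        exact Submodule.add_mem _ (Submodule.smul_mem _ _ hpU') hb
      set al : ℝ := (inner ℝ e y : ℝ) with haldef
      set y'' : E := y - al • e with hy''def
      have hy''U' : y'' ∈ U' := hsplit y hy
      have hy''norm : ‖y''‖ ^ 2 = ‖y‖ ^ 2 - al ^ 2 := norm_proj_sq e y hee
      set v'' : E := v 0 - d • e with hv''def
      have hv''U' : v'' ∈ U' := by rw [hv0de]; exact hpU'
      have hv''norm : ‖v''‖ ^ 2 = 1 - d ^ 2 := by
        have h := norm_proj_sq e (v 0) hee
        rw [hev0, hv 0] at h
        rw [hv''def, h]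
        norm_num
      set be : ℝ := (inner ℝ v'' y'' : ℝ) with hbedef
      have hbe : be ^ 2 ≤ (1 - d ^ 2) * (‖y‖ ^ 2 - al ^ 2) := by
        have h := real_inner_mul_inner_self_le v'' y''
        rw [real_inner_self_eq_norm_sq, real_inner_self_eq_norm_sq, hv''norm, hy''norm] at h
        rw [hbedef]; nlinarith [h]
      have ha0 : a0 = al * d + be := by
        have hy2 : y = y'' + al • e := by rw [hy''def]; abel
        have hv02 : v 0 = v'' + d • e := by rw [hv''def]; abel
        rw [ha0def]
        conv_lhs => rw [hy2, hv02]
        simp only [inner_add_left, inner_add_right, real_inner_smul_left,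
          real_inner_smul_right]
        rw [heperp v'' hv''U', heperp' y'' hy''U', real_inner_self_eq_norm_sq, hee,
          ← hbedef]
        ring
      set ga : ℝ := (inner ℝ e y1 : ℝ) with hgadef
      have hga : ga = al - a0 * d := by
        rw [hgadef, hy1def, inner_sub_right, real_inner_smul_right, hev0, ← haldef]
      have hkey : ga ^ 2 ≤ (1 - d ^ 2) * ‖y‖ ^ 2 := by
        have h := key_scalar al be d ‖y‖ hd0.le hd1 hbe
        have : ga = al * (1 - d ^ 2) - d * be := by rw [hga, ha0]; ring
        rw [this]; exact h
      set z : E := y1 - ga • e with hzdef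
      have hzU' : z ∈ U' := hsplit y1 hy1mem
      have hznorm : ‖z‖ ^ 2 = ‖y1‖ ^ 2 - ga ^ 2 := norm_proj_sq e y1 hee
      obtain ⟨s', li', sp', det_le, hbound⟩ := ih v' hv' z hzU'
      set dt : ℝ := (gram fun i : s' => v' i).det with hdtdef
      have det0 : (0:ℝ) ≤ dt := gram_det_nonneg _
      have hQ2 : Qop v y = Qop v' z + ga • e := by
        rw [hQy]
        have hy1z : y1 = z + ga • e := by rw [hzdef]; abel
        rw [hy1z, Qop_add_orth v' e (fun i => heperp (v' i) (hvU' i))]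
      have hQzU' : Qop v' z ∈ U' := Qop_mem v' U' hvU' z hzU'
      have hQnorm : ‖Qop v y‖ ^ 2 = ‖Qop v' z‖ ^ 2 + ga ^ 2 := by
        have h9 : (inner ℝ (Qop v' z) (ga • e) : ℝ) = 0 := by
          rw [real_inner_smul_right, heperp _ hQzU', mul_zero]
        rw [hQ2, norm_add_sq_real, h9, norm_smul, hee, mul_one, Real.norm_eq_abs, sq_abs]
        ring
      -- construct the subset
      set emb : Fin k ↪ Fin (k+1) := ⟨Fin.succ, Fin.succ_injective k⟩ with hembdef
      set s : Finset (Fin (k+1)) := insert 0 (s'.map emb) with hsdef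
      obtain ⟨e2, he2l, he2r⟩ : ∃ e : (Unit ⊕ ↥s') ≃ ↥s,
          (((e (Sum.inl ()) : ↥s) : Fin (k+1)) = 0) ∧
          (∀ j : ↥s', ((e (Sum.inr j) : ↥s) : Fin (k+1)) = (j : Fin k).succ) := by
        refine ⟨Equiv.ofBijective
          (fun x => Sum.elim
            (fun _ : Unit => (⟨0, Finset.mem_insert_self 0 _⟩ : ↥s))
            (fun j : ↥s' => (⟨(j : Fin k).succ,
              Finset.mem_insert_of_mem (Finset.mem_map_of_mem emb j.2)⟩ : ↥s)) x)
            ⟨?_, ?_⟩, rfl, fun j => rfl⟩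
        · intro a b hab
          match a, b with
          | Sum.inl _, Sum.inl _ => rfl
          | Sum.inl _, Sum.inr j =>
            exact absurd (congrArg Subtype.val hab) (Fin.succ_ne_zero _).symm
          | Sum.inr j, Sum.inl _ =>
            exact absurd (congrArg Subtype.val hab) (Fin.succ_ne_zero _)
          | Sum.inr i, Sum.inr j =>
            have h5 := Fin.succ_injective k (congrArg Subtype.val hab)
            rw [Subtype.ext h5]
        · rintro ⟨x, hx⟩
          rcases Finset.mem_insert.mp hx with h | h
          · exact ⟨Sum.inl (), Subtype.ext h.symm⟩
          · obtain ⟨a, ha, rfl⟩ := Finset.mem_map.mp h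
            exact ⟨Sum.inr ⟨a, ha⟩, rfl⟩
      -- coefficients expressing p
      have hsetrange : (Set.range fun j : s' => v' (j : Fin k)) = v' '' ↑s' := by
        ext w
        constructor
        · rintro ⟨j, rfl⟩
          exact ⟨j.1, j.2, rfl⟩
        · rintro ⟨a, ha, rfl⟩
          exact ⟨⟨a, ha⟩, rfl⟩
      have hpU'' : p ∈ Submodule.span ℝ (Set.range fun x : s' => v' x) := by
        rw [hsetrange, sp']
        exact hpU'
      obtain ⟨c, hcp⟩ := (mem_span_range_iff_exists_fun ℝ).mp hpU''
      -- the determinant computation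
      set g : Unit ⊕ ↥s' → E := fun x => v ((e2 x : ↥s) : Fin (k+1)) with hgdef
      have hgl : g (Sum.inl ()) = v 0 := by rw [hgdef]; show v _ = v 0; rw [he2l]
      have hgr : ∀ j : ↥s', g (Sum.inr j) = v' j := by
        intro j
        show v ((e2 (Sum.inr j) : ↥s) : Fin (k+1)) = v' j
        rw [he2r j]
      have hdet1 : (gram fun i : s => v i).det = (gram g).det :=
        (gram_det_comp_equiv e2 (fun i : s => v (i : Fin (k+1)))).symm
      set A : Matrix (Unit ⊕ ↥s') (Unit ⊕ ↥s') ℝ :=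
        fromBlocks 1 (Matrix.of fun _ j => -(c j)) 0 1 with hAdef
      have hg' : (fun i => ∑ j, A i j • g j) =
          Sum.elim (fun _ : Unit => q) (fun j : s' => v' j) := by
        funext x
        match x with
        | Sum.inl _ =>
          rw [Fintype.sum_sum_type]
          have h1 : ∑ a : Unit, A (Sum.inl ()) (Sum.inl a) • g (Sum.inl a) = v 0 := by
            rw [Fintype.sum_unique]
            have : A (Sum.inl ()) (Sum.inl ()) = 1 := by
              simp [hAdef, Matrix.fromBlocks_apply₁₁, Matrix.one_apply]
            rw [this, one_smul, hgl]
          have h2 : ∑ j : s', A (Sum.inl ()) (Sum.inr j) • g (Sum.inr j) = -p := by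
            rw [← hcp, ← Finset.sum_neg_distrib]
            refine Finset.sum_congr rfl fun j _ => ?_
            have hA12 : A (Sum.inl ()) (Sum.inr j) = -(c j) := by
              simp [hAdef, Matrix.fromBlocks_apply₁₂]
            rw [hA12, hgr j, neg_smul]
          rw [h1, h2]
          show v 0 + -p = q
          rw [hv0pq]; abel
        | Sum.inr i =>
          rw [Fintype.sum_sum_type]
          have h1 : ∑ a : Unit, A (Sum.inr i) (Sum.inl a) • g (Sum.inl a) = 0 := by
            rw [Fintype.sum_unique]
            have : A (Sum.inr i) (Sum.inl ()) = 0 := by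
              simp [hAdef, Matrix.fromBlocks_apply₂₁]
            rw [this, zero_smul]
          have h2 : ∑ j : s', A (Sum.inr i) (Sum.inr j) • g (Sum.inr j) = v' i := by
            rw [Finset.sum_eq_single i]
            · have : A (Sum.inr i) (Sum.inr i) = 1 := by
                simp [hAdef, Matrix.fromBlocks_apply₂₂, Matrix.one_apply]
              rw [this, one_smul, hgr i]
            · intro b _ hb
              have : A (Sum.inr i) (Sum.inr b) = 0 := by
                simp [hAdef, Matrix.fromBlocks_apply₂₂, Matrix.one_apply, Ne.symm hb]
              rw [this, zero_smul]
            · intro h; exact absurd (Finset.mem_univ i) h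
          rw [h1, h2, zero_add]
          rfl
      have hdetA : A.det = 1 := by
        rw [hAdef, Matrix.det_fromBlocks_zero₂₁, Matrix.det_one, Matrix.det_one, mul_one]
      have hdet2 : (gram g).det =
          (gram (Sum.elim (fun _ : Unit => q) (fun j : s' => v' j))).det := by
        rw [← hg', gram_conj, Matrix.det_mul, Matrix.det_mul, hdetA, Matrix.det_transpose,
          hdetA, one_mul, mul_one]
      have hdet3 : gram (Sum.elim (fun _ : Unit => q) (fun j : s' => v' j)) =
          fromBlocks (Matrix.of fun _ _ : Unit => d ^ 2) 0 0 (gram fun j : s' => v' j) := by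
        ext x y
        match x, y with
        | Sum.inl _, Sum.inl _ =>
          simp [gram, fromBlocks, real_inner_self_eq_norm_sq, hddef]
        | Sum.inl _, Sum.inr j =>
          have h8 : (inner ℝ q (v' (j : Fin k)) : ℝ) = 0 := by
            rw [real_inner_comm]
            exact (Submodule.mem_orthogonal U' q).mp hqperp _ (hvU' j)
          simp [gram, fromBlocks, h8]
        | Sum.inr i, Sum.inl _ =>
          have h8 : (inner ℝ (v' (i : Fin k)) q : ℝ) = 0 :=
            (Submodule.mem_orthogonal U' q).mp hqperp _ (hvU' i)
          simp [gram, fromBlocks, h8]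
        | Sum.inr i, Sum.inr j =>
          simp [gram, fromBlocks]
      have hdet4 : (gram fun i : s => v i).det = d ^ 2 * dt := by
        rw [hdet1, hdet2, hdet3, Matrix.det_fromBlocks_zero₂₁, Matrix.det_unique, hdtdef]
        simp
      -- linear independence
      have hv0ne : v 0 ≠ 0 := by
        intro h
        have := hv 0
        rw [h, norm_zero] at this
        exact one_ne_zero this.symm
      have hdisj : Disjoint (Submodule.span ℝ (Set.range fun _ : Unit => v 0))
          (Submodule.span ℝ (Set.range fun j : s' => v' j)) := by
        have h3 : Set.range (fun _ : Unit => v 0) = {v 0} := Set.range_const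
        rw [h3, hsetrange, sp', disjoint_comm, Submodule.disjoint_span_singleton]
        intro h
        exact absurd h hc
      have hliw : LinearIndependent ℝ (Sum.elim (fun _ : Unit => v 0) (fun j : s' => v' j)) :=
        LinearIndependent.sum_type (LinearIndependent.of_subsingleton () hv0ne) li' hdisj
      have hli : LinearIndependent ℝ (fun i : s => v i) := by
        have h1 := hliw.comp e2.symm e2.symm.injective
        have h2 : (Sum.elim (fun _ : Unit => v 0) (fun j : s' => v' j) ∘ e2.symm)
            = fun i : s => v i := by
          funext x
          show Sum.elim (fun _ : Unit => v 0) (fun j : s' => v' j) (e2.symm x) = v x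
          have hkey2 : ∀ t : Unit ⊕ ↥s',
              Sum.elim (fun _ : Unit => v 0) (fun j : s' => v' j) t
                = v ((e2 t : ↥s) : Fin (k+1)) := by
            intro t
            match t with
            | Sum.inl u => show v 0 = _ ; rw [he2l]
            | Sum.inr j => show v' j = _ ; rw [he2r j]
          rw [hkey2 (e2.symm x), Equiv.apply_symm_apply]
        rwa [h2] at h1
      -- span
      have himg : v '' ↑s = insert (v 0) (v' '' ↑s') := by
        rw [hsdef, Finset.coe_insert, Set.image_insert_eq, Finset.coe_map, Set.image_image]
        rfl
      have hspan : Submodule.span ℝ (v '' ↑s) = Submodule.span ℝ (Set.range v) := by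
        rw [himg, Submodule.span_insert, sp', hU, hU'def]
      refine ⟨s, hli, hspan, ?_, ?_⟩
      · exact hdet4.trans_le (by nlinarith [det_le, det0, hd1, hd0.le])
      · have hAA : dt * (d ^ 2 * ‖y‖ ^ 2) ≤ dt * (‖y‖ ^ 2 - ga ^ 2) :=
          mul_le_mul_of_nonneg_left (by nlinarith [hkey]) det0
        have hBB : ‖y‖ ^ 2 - ga ^ 2 = a0 ^ 2 + ‖z‖ ^ 2 := by
          rw [hznorm, hnormy1]; ring
        have hCC : dt * (a0 ^ 2 + ‖z‖ ^ 2) ≤ a0 ^ 2 + dt * ‖z‖ ^ 2 := by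
          nlinarith [sq_nonneg a0, det_le, det0]
        have hbound' : ‖Qop v' z‖ ^ 2 ≤ ‖z‖ ^ 2 - dt * ‖z‖ ^ 2 := by
          have hx : (1 - dt) * ‖z‖ ^ 2 = ‖z‖ ^ 2 - dt * ‖z‖ ^ 2 := by ring
          linarith [hbound, hx]
        rw [hBB] at hAA
        have hgA : dt * (d ^ 2 * ‖y‖ ^ 2) ≤ a0 ^ 2 + dt * ‖z‖ ^ 2 := hAA.trans hCC
        have hexp : (1 - d ^ 2 * dt) * ‖y‖ ^ 2 = ‖y‖ ^ 2 - dt * (d ^ 2 * ‖y‖ ^ 2) := by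
          ring
        have hgoal : ‖Qop v y‖ ^ 2 ≤ (1 - d ^ 2 * dt) * ‖y‖ ^ 2 := by
          linarith [hQnorm, hbound', hgA, hBB, hexp]
        calc ‖Qop v y‖ ^ 2 ≤ (1 - d ^ 2 * dt) * ‖y‖ ^ 2 := hgoal
          _ = (1 - (gram fun i : s => v i).det) * ‖y‖ ^ 2 := by rw [hdet4]

end MeanyAux

end MeanyAux



open Matrix

/-- Meany's inequality: for unit vectors `v 0, …, v (k-1)` in `ℝ^n` with span `S`, and
`Q = (I - v_{k-1} v_{k-1}ᵀ) ⋯ (I - v_0 v_0ᵀ)` (the factor for `v 0` applied first), every unit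
vector `y ∈ S` satisfies `‖Q y‖ ≤ √(1 - min_F det(FᵀF))`, where `F` ranges over matrices whose
columns form a maximal linearly independent subset of `{v 0, …, v (k-1)}` (the Gram matrix
`FᵀF` has entries `⟪v i, v j⟫`). -/
theorem meany_inequality (n k : ℕ) (v : Fin k → EuclideanSpace ℝ (Fin n))
    (hv : ∀ i, ‖v i‖ = 1)
    (S : Submodule ℝ (EuclideanSpace ℝ (Fin n)))
    (hS : S = Submodule.span ℝ (Set.range v))
    (Q : Function.End (EuclideanSpace ℝ (Fin n)))
    (hQ : Q = (((List.ofFn fun i : Fin k =>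
      (fun x : EuclideanSpace ℝ (Fin n) => x - (inner ℝ (v i) x : ℝ) • v i)) :
        List (Function.End (EuclideanSpace ℝ (Fin n)))).reverse).prod)
    (D : Set ℝ)
    (hD : D = {t : ℝ | ∃ s : Finset (Fin k),
      LinearIndependent ℝ (fun i : s => v i) ∧
      Submodule.span ℝ (v '' ↑s) = S ∧
      t = (Matrix.of fun i j : s => (inner ℝ (v i) (v j) : ℝ)).det}) :
    ∀ y ∈ S, ‖y‖ = 1 → ‖Q y‖ ≤ Real.sqrt (1 - sInf D) := by
  intro y hy hnorm
  have hQQ : Q = MeanyAux.Qop v := hQ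
  have hy' : y ∈ Submodule.span ℝ (Set.range v) := by rwa [hS] at hy
  obtain ⟨s, hli, hsp, hdet1, hbound⟩ := MeanyAux.main k v hv y hy'
  set t : ℝ := (MeanyAux.gram fun i : s => v i).det with htdef
  have htD : t ∈ D := by
    rw [hD]
    exact ⟨s, hli, by rw [hS]; exact hsp, rfl⟩
  have hbdd : BddBelow D := by
    refine ⟨0, fun x hx => ?_⟩
    rw [hD] at hx
    obtain ⟨s', h1, h2, rfl⟩ := hx
    exact MeanyAux.gram_det_nonneg (fun i : s' => v i)
  have hinf : sInf D ≤ t := csInf_le hbdd htD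
  have h2 : ‖Q y‖ ^ 2 ≤ 1 - sInf D := by
    rw [hQQ]
    have h3 := hbound
    rw [hnorm] at h3
    have h4 : (1 - t) * 1 ^ 2 = 1 - t := by ring
    rw [h4] at h3
    linarith
  calc ‖Q y‖ = Real.sqrt (‖Q y‖ ^ 2) := (Real.sqrt_sq (norm_nonneg _)).symm
    _ ≤ Real.sqrt (1 - sInf D) := Real.sqrt_le_sqrt h2
end

section
/- Suppose w, w_0, w_1, ... are i.i.d. random vectors in R^n, A ∈ R^{n×d}, and R(w) is the smallest subspace almost surely containing Aᵀw. Then there exists π ∈ (0,1] such that for every unit vector v ∈ R(w), P(vᵀ Aᵀ w ≠ 0) ≥ π. -/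
open Matrix MeasureTheory ProbabilityTheory
open scoped ENNReal

/-- If `w, w_0, w_1, …` are i.i.d. random vectors in `ℝ^n` and `R(w)` is the smallest subspace
almost surely containing `Aᵀw`, then there is `π ∈ (0,1]` with `P(vᵀAᵀw ≠ 0) ≥ π` for every
unit vector `v ∈ R(w)`. -/
theorem uniform_nondegeneracy_on_Rw (n d : ℕ)
    {Ω : Type*} [MeasurableSpace Ω] (μ : Measure Ω) [IsProbabilityMeasure μ]
    (A : Matrix (Fin n) (Fin d) ℝ)
    (w : Ω → EuclideanSpace ℝ (Fin n)) (ws : ℕ → Ω → EuclideanSpace ℝ (Fin n))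
    (hw : Measurable w) (hws : ∀ k, Measurable (ws k))
    (hindep : iIndepFun ws μ)
    (hident : ∀ k, IdentDistrib (ws k) w μ μ)
    (R : Submodule ℝ (EuclideanSpace ℝ (Fin d)))
    (hRas : μ {ω | (WithLp.toLp 2 (Aᵀ *ᵥ w ω) : EuclideanSpace ℝ (Fin d)) ∈ R} = 1)
    (hRmin : ∀ U : Submodule ℝ (EuclideanSpace ℝ (Fin d)),
      μ {ω | (WithLp.toLp 2 (Aᵀ *ᵥ w ω) : EuclideanSpace ℝ (Fin d)) ∈ U} = 1 → R ≤ U) :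
    ∃ π : ℝ≥0∞, 0 < π ∧ π ≤ 1 ∧
      ∀ v ∈ R, ‖v‖ = 1 →
        π ≤ μ {ω | (inner ℝ v ((WithLp.toLp 2 (Aᵀ *ᵥ w ω) : EuclideanSpace ℝ (Fin d))) : ℝ) ≠ 0} := by
  classical
  set X : Ω → EuclideanSpace ℝ (Fin d) := fun ω => (WithLp.toLp 2 (Aᵀ *ᵥ w ω) : EuclideanSpace ℝ (Fin d))
    with hXdef
  have hXmeas : Measurable X := by
    have hM : Measurable fun ω => Aᵀ *ᵥ w ω := by
      rw [measurable_pi_iff]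
      intro i
      simp only [Matrix.mulVec, dotProduct]
      exact Finset.measurable_sum _ fun j _ =>
        measurable_const.mul ((measurable_pi_apply j).comp
          ((PiLp.continuous_ofLp 2 _).measurable.comp hw))
    exact (PiLp.continuous_toLp 2 _).measurable.comp hM
  set f : EuclideanSpace ℝ (Fin d) → ℝ≥0∞ :=
    fun v => μ {ω | (inner ℝ v (X ω) : ℝ) ≠ 0} with hfdef
  have hmeasset : ∀ v : EuclideanSpace ℝ (Fin d),
      MeasurableSet {ω | (inner ℝ v (X ω) : ℝ) ≠ 0} := by
    intro v
    have h1 : Measurable fun ω => (inner ℝ v (X ω) : ℝ) :=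
      (Continuous.inner continuous_const continuous_id).measurable.comp hXmeas
    exact h1 (measurableSet_singleton (0 : ℝ)).compl
  -- positivity for each unit vector in R
  have hpos : ∀ v ∈ R, ‖v‖ = 1 → 0 < f v := by
    intro v hvR hv1
    rcases eq_zero_or_pos (f v) with h0 | h
    · exfalso
      have hcompl : μ {ω | (inner ℝ v (X ω) : ℝ) = 0} = 1 := by
        have hs : {ω | (inner ℝ v (X ω) : ℝ) = 0}
            = {ω | (inner ℝ v (X ω) : ℝ) ≠ 0}ᶜ := by
          ext ω; simp
        rw [hs, measure_compl (hmeasset v) (measure_ne_top μ _)]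
        have : μ {ω | (inner ℝ v (X ω) : ℝ) ≠ 0} = 0 := h0
        rw [this, measure_univ, tsub_zero]
      have hU : μ {ω | X ω ∈ ((ℝ ∙ v)ᗮ : Submodule ℝ (EuclideanSpace ℝ (Fin d)))} = 1 := by
        have : {ω | X ω ∈ ((ℝ ∙ v)ᗮ : Submodule ℝ (EuclideanSpace ℝ (Fin d)))}
            = {ω | (inner ℝ v (X ω) : ℝ) = 0} := by
          ext ω; simp [Submodule.mem_orthogonal_singleton_iff_inner_right]
        rw [this, hcompl]
      have hvU : v ∈ (ℝ ∙ v)ᗮ := hRmin _ hU hvR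
      rw [Submodule.mem_orthogonal_singleton_iff_inner_right] at hvU
      have : v = 0 := inner_self_eq_zero.mp hvU
      rw [this, norm_zero] at hv1
      exact zero_ne_one hv1
    · exact h
  -- compactness of the unit sphere in R
  set K : Set (EuclideanSpace ℝ (Fin d)) := {v | v ∈ R ∧ ‖v‖ = 1} with hKdef
  have hKc : IsCompact K := by
    have hK : K = (R : Set (EuclideanSpace ℝ (Fin d))) ∩ Metric.sphere 0 1 := by
      ext v; simp [hKdef]
    rw [hK]
    exact Metric.isCompact_of_isClosed_isBounded
      ((Submodule.closed_of_finiteDimensional R).inter Metric.isClosed_sphere)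
      (Metric.isBounded_sphere.subset Set.inter_subset_right)
  have hinf : 0 < ⨅ v : K, f v := by
    rw [pos_iff_ne_zero]
    intro h0
    have hex : ∀ k : ℕ, ∃ v : K, f v < ((k : ℝ≥0∞) + 1)⁻¹ := by
      intro k
      have hlt : (⨅ v : K, f v) < ((k : ℝ≥0∞) + 1)⁻¹ := by
        rw [h0]
        exact ENNReal.inv_pos.mpr (by simp)
      exact iInf_lt_iff.mp hlt
    choose u hu using hex
    obtain ⟨a, haK, φ, hφ, hta⟩ := hKc.tendsto_subseq (fun k => (u k).2)
    set g : ℕ → EuclideanSpace ℝ (Fin d) := fun k => (u (φ k) : _) with hgdef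
    have hgf : ∀ k, f (g k) < ((k : ℝ≥0∞) + 1)⁻¹ := by
      intro k
      refine lt_of_lt_of_le (hu (φ k)) ?_
      have : (k : ℝ≥0∞) + 1 ≤ (φ k : ℝ≥0∞) + 1 := by
        gcongr
        exact_mod_cast hφ.le_apply
      exact ENNReal.inv_le_inv.mpr this
    have hsub : {ω | (inner ℝ a (X ω) : ℝ) ≠ 0}
        ⊆ ⋃ N : ℕ, ⋂ k, ⋂ (_ : N ≤ k), {ω | (inner ℝ (g k) (X ω) : ℝ) ≠ 0} := by
      intro ω hω
      have hcont : Filter.Tendsto (fun k => (inner ℝ (g k) (X ω) : ℝ))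
          Filter.atTop (nhds (inner ℝ a (X ω))) := by
        have hc : Continuous fun v : EuclideanSpace ℝ (Fin d) => (inner ℝ v (X ω) : ℝ) :=
          Continuous.inner continuous_id continuous_const
        exact (hc.tendsto a).comp hta
      obtain ⟨N, hN⟩ := Filter.eventually_atTop.mp (hcont.eventually_ne hω)
      exact Set.mem_iUnion.mpr ⟨N, Set.mem_iInter₂.mpr fun k hk => hN k hk⟩
    have hz : ∀ N : ℕ,
        μ (⋂ k, ⋂ (_ : N ≤ k), {ω | (inner ℝ (g k) (X ω) : ℝ) ≠ 0}) = 0 := by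
      intro N
      by_contra hne
      obtain ⟨m, hm⟩ := ENNReal.exists_inv_nat_lt hne
      set k := max N m with hkdef
      have h1 : μ (⋂ k, ⋂ (_ : N ≤ k), {ω | (inner ℝ (g k) (X ω) : ℝ) ≠ 0}) ≤ f (g k) :=
        measure_mono fun ω hω => Set.mem_iInter₂.mp hω k (le_max_left _ _)
      have h3 : ((k : ℝ≥0∞) + 1)⁻¹ ≤ ((m : ℝ≥0∞))⁻¹ := by
        refine ENNReal.inv_le_inv.mpr ?_
        have : (m : ℝ≥0∞) ≤ (k : ℝ≥0∞) := by exact_mod_cast le_max_right N m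
        exact this.trans (le_add_of_nonneg_right zero_le)
      exact absurd (hm.trans_le (h1.trans ((hgf k).le.trans h3))) (lt_irrefl _)
    have hfa : f a = 0 :=
      le_antisymm ((measure_mono hsub).trans (measure_iUnion_null hz).le) zero_le
    exact absurd hfa (hpos a haK.1 haK.2).ne'
  refine ⟨min 1 (⨅ v : K, f v), lt_min one_pos hinf, min_le_left _ _, ?_⟩
  intro v hvR hv1
  exact (min_le_right _ _).trans (iInf_le (fun v : K => f v) ⟨v, hvR, hv1⟩)
end

section
/- Let w be a random vector in R^n such that P(Aᵀw ∈ V) < 1 for every proper subspace V of R(w), where R(w) is the minimal subspace almost surely containing Aᵀw. Then there is no sequence of proper subspaces V_m ⊊ R(w) of a fixed dimension r with P(Aᵀw ∈ V_m) → 1; equivalently, sup over proper subspaces V ⊊ R(w) of P(Aᵀw ∈ V) < 1. -/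
open Matrix MeasureTheory
open scoped ENNReal

/-- If `P(Aᵀw ∈ V) < 1` for every proper subspace `V` of `R(w)` (the minimal subspace almost
surely containing `Aᵀw`), then the supremum of `P(Aᵀw ∈ V)` over proper subspaces `V ⊊ R(w)`
is strictly less than `1`. -/
theorem sup_over_proper_subspaces_lt_one (n d : ℕ)
    {Ω : Type*} [MeasurableSpace Ω] (μ : Measure Ω) [IsProbabilityMeasure μ]
    (A : Matrix (Fin n) (Fin d) ℝ) (w : Ω → EuclideanSpace ℝ (Fin n))
    (hw : Measurable w)
    (R : Submodule ℝ (EuclideanSpace ℝ (Fin d)))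
    (hRas : μ {ω | (WithLp.toLp 2 (Aᵀ *ᵥ w ω) : EuclideanSpace ℝ (Fin d)) ∈ R} = 1)
    (hRmin : ∀ U : Submodule ℝ (EuclideanSpace ℝ (Fin d)),
      μ {ω | (WithLp.toLp 2 (Aᵀ *ᵥ w ω) : EuclideanSpace ℝ (Fin d)) ∈ U} = 1 → R ≤ U)
    (hproper : ∀ V : Submodule ℝ (EuclideanSpace ℝ (Fin d)), V < R →
      μ {ω | (WithLp.toLp 2 (Aᵀ *ᵥ w ω) : EuclideanSpace ℝ (Fin d)) ∈ V} < 1) :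
    sSup {p : ℝ≥0∞ | ∃ V : Submodule ℝ (EuclideanSpace ℝ (Fin d)), V < R ∧
      p = μ {ω | (WithLp.toLp 2 (Aᵀ *ᵥ w ω) : EuclideanSpace ℝ (Fin d)) ∈ V}} < 1 := by
  classical
  set f : Ω → EuclideanSpace ℝ (Fin d) := fun ω => WithLp.toLp 2 (Aᵀ *ᵥ w ω) with hfdef
  have hfm : Measurable f := by
    rw [hfdef]
    refine (PiLp.continuous_toLp 2 _).measurable.comp ?_
    apply measurable_pi_iff.2
    intro i
    simp only [mulVec, dotProduct]
    exact Finset.measurable_sum _ fun j _ =>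
      measurable_const.mul (((measurable_pi_apply j).comp (PiLp.continuous_ofLp 2 _).measurable).comp hw)
  set g : Submodule ℝ (EuclideanSpace ℝ (Fin d)) → ℝ≥0∞ :=
    fun V => μ {ω | f ω ∈ V} with hgdef
  -- inclusion-exclusion
  have hkey : ∀ V W : Submodule ℝ (EuclideanSpace ℝ (Fin d)),
      g V + g W ≤ 1 + g (V ⊓ W) := by
    intro V W
    have hWm : MeasurableSet {ω | f ω ∈ W} :=
      hfm (Submodule.closed_of_finiteDimensional W).measurableSet
    have hinter : {ω | f ω ∈ V} ∩ {ω | f ω ∈ W} = {ω | f ω ∈ V ⊓ W} := by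
      ext ω; simp [Submodule.mem_inf]
    calc g V + g W = μ ({ω | f ω ∈ V} ∪ {ω | f ω ∈ W}) +
        μ ({ω | f ω ∈ V} ∩ {ω | f ω ∈ W}) :=
          (measure_union_add_inter _ hWm).symm
      _ ≤ 1 + g (V ⊓ W) := by
          rw [hinter]
          exact add_le_add prob_le_one le_rfl
  have main : ∀ r : ℕ,
      sSup {p : ℝ≥0∞ | ∃ V : Submodule ℝ (EuclideanSpace ℝ (Fin d)),
        V < R ∧ Module.finrank ℝ V < r ∧ p = g V} < 1 := by
    intro r
    induction r with
    | zero =>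
      have : {p : ℝ≥0∞ | ∃ V : Submodule ℝ (EuclideanSpace ℝ (Fin d)),
          V < R ∧ Module.finrank ℝ V < 0 ∧ p = g V} = ∅ := by
        ext p; simp
      rw [this, sSup_empty]
      exact zero_lt_one
    | succ r ih =>
      set s : ℝ≥0∞ := sSup {p : ℝ≥0∞ | ∃ V : Submodule ℝ (EuclideanSpace ℝ (Fin d)),
        V < R ∧ Module.finrank ℝ V < r ∧ p = g V} with hsdef
      have hs1 : s < 1 := ih
      have hsne : s ≠ ⊤ := (hs1.trans ENNReal.one_lt_top).ne
      set t : ℝ≥0∞ := s + (1 - s) / 2 with htdef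
      have h1s : (1 : ℝ≥0∞) - s ≠ 0 := by
        simp only [ne_eq, tsub_eq_zero_iff_le, not_le]
        exact hs1
      have h1stop : (1 : ℝ≥0∞) - s ≠ ⊤ :=
        (lt_of_le_of_lt tsub_le_self ENNReal.one_lt_top).ne
      have ht1 : t < 1 := by
        have : (1 - s) / 2 < 1 - s :=
          ENNReal.half_lt_self h1s h1stop
        calc t < s + (1 - s) := ENNReal.add_lt_add_left hsne this
          _ = 1 := add_tsub_cancel_of_le hs1.le
      have htt : t + t = 1 + s := by
        have h2 : (1 - s) / 2 + (1 - s) / 2 = 1 - s := ENNReal.add_halves _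
        calc t + t = (s + s) + ((1 - s) / 2 + (1 - s) / 2) := by ring
          _ = (s + s) + (1 - s) := by rw [h2]
          _ = s + (s + (1 - s)) := by ring
          _ = s + 1 := by rw [add_tsub_cancel_of_le hs1.le]
          _ = 1 + s := add_comm _ _
      -- at most one proper subspace of rank ≤ r can have g > t
      by_cases hex : ∃ V₀ : Submodule ℝ (EuclideanSpace ℝ (Fin d)),
          V₀ < R ∧ Module.finrank ℝ V₀ < r + 1 ∧ t < g V₀
      · obtain ⟨V₀, hV₀R, hV₀r, hV₀t⟩ := hex
        have hbound : ∀ p ∈ {p : ℝ≥0∞ | ∃ V : Submodule ℝ (EuclideanSpace ℝ (Fin d)),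
            V < R ∧ Module.finrank ℝ V < r + 1 ∧ p = g V}, p ≤ max (g V₀) t := by
          rintro p ⟨V, hVR, hVr, rfl⟩
          by_cases hVV : V = V₀
          · subst hVV; exact le_max_left _ _
          · refine le_max_of_le_right ?_
            by_contra hgt
            push_neg at hgt
            have hsum : 1 + s < g V + g V₀ := by
              calc 1 + s = t + t := htt.symm
                _ < g V + g V₀ := ENNReal.add_lt_add hgt hV₀t
            have hint : 1 + s < 1 + g (V ⊓ V₀) := hsum.trans_le (hkey V V₀)
            have hsint : s < g (V ⊓ V₀) :=
              (ENNReal.add_lt_add_iff_left ENNReal.one_ne_top).1 hint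
            -- V ⊓ V₀ has rank < r
            have hrank : Module.finrank ℝ (V ⊓ V₀ : Submodule ℝ (EuclideanSpace ℝ (Fin d))) < r := by
              have hne : V ⊓ V₀ < V ∨ V ⊓ V₀ < V₀ := by
                rcases lt_or_eq_of_le (inf_le_left : V ⊓ V₀ ≤ V) with h | h
                · exact Or.inl h
                · rcases lt_or_eq_of_le (inf_le_right : V ⊓ V₀ ≤ V₀) with h' | h'
                  · exact Or.inr h'
                  · exact absurd (le_antisymm (h ▸ inf_le_right) (h' ▸ inf_le_left)) hVV
              rcases hne with h | h
              · exact lt_of_lt_of_le (Submodule.finrank_lt_finrank_of_lt h)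
                  (Nat.lt_succ_iff.1 hVr)
              · exact lt_of_lt_of_le (Submodule.finrank_lt_finrank_of_lt h)
                  (Nat.lt_succ_iff.1 hV₀r)
            have hmem : g (V ⊓ V₀) ≤ s :=
              le_sSup ⟨V ⊓ V₀, lt_of_le_of_lt inf_le_right hV₀R, hrank, rfl⟩
            exact absurd hsint (not_lt.2 hmem)
        have : sSup {p : ℝ≥0∞ | ∃ V : Submodule ℝ (EuclideanSpace ℝ (Fin d)),
            V < R ∧ Module.finrank ℝ V < r + 1 ∧ p = g V} ≤ max (g V₀) t :=
          sSup_le hbound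
        exact this.trans_lt (max_lt (hproper V₀ hV₀R) ht1)
      · push_neg at hex
        have : sSup {p : ℝ≥0∞ | ∃ V : Submodule ℝ (EuclideanSpace ℝ (Fin d)),
            V < R ∧ Module.finrank ℝ V < r + 1 ∧ p = g V} ≤ t := by
          apply sSup_le
          rintro p ⟨V, hVR, hVr, rfl⟩
          exact hex V hVR hVr
        exact this.trans_lt ht1
  have hsetseq : {p : ℝ≥0∞ | ∃ V : Submodule ℝ (EuclideanSpace ℝ (Fin d)), V < R ∧
      p = μ {ω | (WithLp.toLp 2 (Aᵀ *ᵥ w ω) : EuclideanSpace ℝ (Fin d)) ∈ V}} =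
      {p : ℝ≥0∞ | ∃ V : Submodule ℝ (EuclideanSpace ℝ (Fin d)),
        V < R ∧ Module.finrank ℝ V < d + 1 ∧ p = g V} := by
    ext p
    constructor
    · rintro ⟨V, hVR, rfl⟩
      refine ⟨V, hVR, ?_, rfl⟩
      have : Module.finrank ℝ V ≤ Module.finrank ℝ (EuclideanSpace ℝ (Fin d)) :=
        Submodule.finrank_le V
      simpa [finrank_euclideanSpace] using Nat.lt_succ_of_le this
    · rintro ⟨V, hVR, _, rfl⟩
      exact ⟨V, hVR, rfl⟩
  rw [hsetseq]
  exact main (d + 1)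
end
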